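/- arXiv:2505.22351 — 9 statements merged into one kernel-verified Lean document; each statement's English description precedes it below -/
import Mathlib

section
/- For every integer d ≥ 1, in any red-blue d-colouring of a connected P4-free graph, one of the two colour classes has size at most 2d. -/
open SimpleGraph

def IsRBColouring {V : Type*} (G : SimpleGraph V) (d : ℕ) (c : V → Bool) : Prop :=
  (∃ v, c v = true) ∧ (∃ v, c v = false) ∧
    ∀ v, {u | G.Adj v u ∧ c u ≠ c v}.ncard ≤ d

/-- `a,b,c,d` form an induced path on 4 vertices in `G`. -/
def IsInducedP4 {V : Type*} (G : SimpleGraph V) (a b c d : V) : Prop :=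
  G.Adj a b ∧ G.Adj b c ∧ G.Adj c d ∧
  ¬G.Adj a c ∧ ¬G.Adj a d ∧ ¬G.Adj b d ∧
  a ≠ c ∧ a ≠ d ∧ b ≠ d

def P4Free {V : Type*} (G : SimpleGraph V) : Prop :=
  ¬∃ a b c d : V, IsInducedP4 G a b c d

/-
A connected P4-free graph `G` on at least two vertices has disconnected complement (Seinsche).
Otherwise, for every vertex `v`, both `G - v` and `Gᶜ - v` are connected, which contradicts
induction on the number of vertices. Indeed, if `G - v` were disconnected, an edge `x y` in the
component of a non-neighbour of `v`, with `y` adjacent to `v` and `x` not, and a neighbour `b`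
of `v` in another component form an induced path `x - y - v - b`; the same applies to the
P4-free graph `Gᶜ`. So the vertices split into two non-empty parts `X`, `Y` complete to each
other.

If some colour `b` occurs at `x ∈ X` and at `y ∈ Y`, every vertex of the other colour is a
differently coloured neighbour of `x` or of `y`, so that class has at most `2d` vertices.
Otherwise `X` is monochromatic, and the other colour class consists of differently coloured
neighbours of a single vertex of `X`.
-/

section

variable {V : Type*} {G : SimpleGraph V}

theorem IsInducedP4.of_compl {a b c d : V} (h : IsInducedP4 Gᶜ a b c d) :
    IsInducedP4 G b d a c := by
  simp only [IsInducedP4, compl_adj] at *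
  grind [G.adj_comm]

theorem P4Free.compl (h : P4Free G) : P4Free Gᶜ :=
  fun ⟨a, b, c, d, hP⟩ => h ⟨b, d, a, c, hP.of_compl⟩

theorem P4Free.induce {s : Set V} (h : P4Free G) : P4Free (G.induce s) := by
  rintro ⟨a, b, c, d, hab, hbc, hcd, hac, had, hbd, hac', had', hbd'⟩
  exact h ⟨a, b, c, d, hab, hbc, hcd, hac, had, hbd,
    fun e => hac' (Subtype.ext e), fun e => had' (Subtype.ext e), fun e => hbd' (Subtype.ext e)⟩

theorem SimpleGraph.compl_induce (s : Set V) : (G.induce s)ᶜ = Gᶜ.induce s := by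
  ext a b
  simp only [compl_adj, comap_adj, Function.Embedding.coe_subtype, ne_eq, Subtype.ext_iff]

/-- `C` plays the role of the component of `w` in `G - v`, and `t` lies in another one. -/
theorem exists_isInducedP4_of_closed_set (hG : G.Connected) {C : Set V} {v w t : V}
    (hvC : v ∉ C) (hC : ∀ x ∈ C, ∀ y, G.Adj x y → y ≠ v → y ∈ C) (hwC : w ∈ C)
    (hvw : ¬G.Adj v w) (htC : t ∉ C) (htv : t ≠ v) :
    ∃ a b c d, IsInducedP4 G a b c d := by
  obtain ⟨⟨⟨x, y⟩, hxy⟩, -, ⟨hxC, hvx⟩, hy⟩ :=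
    (hG.preconnected w v).some.exists_boundary_dart {x | x ∈ C ∧ ¬G.Adj v x} ⟨hwC, hvw⟩
      (fun h => hvC h.1)
  have hyv : y ≠ v := by rintro rfl; exact hvx hxy.symm
  have hyC : y ∈ C := hC x hxC y hxy hyv
  have hvy : G.Adj v y := by by_contra h; exact hy ⟨hyC, h⟩
  obtain ⟨⟨⟨b, v'⟩, hbv⟩, -, hbC, hv'⟩ :=
    (hG.preconnected t v).some.exists_boundary_dart {x | x ∉ C ∧ x ≠ v} ⟨htC, htv⟩
      (fun h => h.2 rfl)
  have hv' : v' = v := by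
    by_contra h; exact hv' ⟨fun hv'C => hbC.1 (hC v' hv'C b hbv.symm hbC.2), h⟩
  subst hv'
  have hCb : ∀ z ∈ C, ¬G.Adj z b := fun z hz hzb => hbC.1 (hC z hz b hzb hbC.2)
  exact ⟨x, y, v', b, hxy, hvy.symm, hbv.symm, fun h => hvx h.symm, hCb x hxC, hCb y hyC,
    fun h => hvC (h ▸ hxC), fun h => hbC.1 (h ▸ hxC), fun h => hbC.1 (h ▸ hyC)⟩

theorem P4Free.preconnected_induce_compl_singleton (hP4 : P4Free G) (hG : G.Connected)
    {v w : V} (hwv : w ≠ v) (hvw : ¬G.Adj v w) : (G.induce {v}ᶜ).Preconnected := by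
  set H := G.induce {v}ᶜ
  by_contra hH
  have hw : w ∈ ({v}ᶜ : Set V) := hwv
  obtain ⟨t, ht⟩ : ∃ t, ¬H.Reachable ⟨w, hw⟩ t := by
    by_contra! h
    exact hH fun p q => (h p).symm.trans (h q)
  refine hP4 (exists_isInducedP4_of_closed_set hG
    (C := {x | ∃ hx : x ≠ v, H.Reachable ⟨w, hw⟩ ⟨x, hx⟩})
    (fun h => h.1 rfl) ?_ ⟨hwv, .rfl⟩ hvw (fun h => ht h.2) t.2)
  rintro x ⟨hxv, hx⟩ y hxy hyv
  exact ⟨hyv, hx.trans (Adj.reachable (G := H) hxy)⟩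

theorem P4Free.preconnected_induce_compl_singleton_of_connected_compl [Nontrivial V]
    (hP4 : P4Free G) (hG : G.Connected) (hGc : Gᶜ.Connected) (v : V) :
    (G.induce {v}ᶜ).Preconnected := by
  obtain ⟨w, hvw⟩ := hGc.preconnected.exists_adj_of_nontrivial v
  exact hP4.preconnected_induce_compl_singleton hG hvw.ne' hvw.2

theorem P4Free.not_preconnected_compl [Finite V] [Nontrivial V] (hP4 : P4Free G)
    (hG : G.Connected) : ¬Gᶜ.Preconnected := by
  induction hn : Nat.card V using Nat.strong_induction_on generalizing V with
  | _ n ih =>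
  intro hGc'
  have hGc : Gᶜ.Connected := ⟨hGc'⟩
  obtain ⟨v⟩ : Nonempty V := inferInstance
  obtain ⟨z, hz⟩ := hG.preconnected.exists_adj_of_nontrivial v
  obtain ⟨z', hz'⟩ := hGc'.exists_adj_of_nontrivial v
  have : Nontrivial ({v}ᶜ : Set V) :=
    ⟨⟨⟨z, hz.ne'⟩, ⟨z', hz'.ne'⟩, fun h => hz'.2 (Subtype.mk.inj h ▸ hz)⟩⟩
  have hH := hP4.preconnected_induce_compl_singleton_of_connected_compl hG hGc v
  have hHc := hP4.compl.preconnected_induce_compl_singleton_of_connected_compl hGc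
    (by rwa [compl_compl]) v
  have hcard : Nat.card ({v}ᶜ : Set V) < n :=
    hn ▸ Finite.card_subtype_lt (p := (· ∈ ({v}ᶜ : Set V))) (x := v) (by simp)
  exact ih _ hcard hP4.induce ⟨hH⟩ rfl (by rwa [compl_induce])

theorem exists_complete_cut_of_not_preconnected_compl (h : ¬Gᶜ.Preconnected) :
    ∃ X : Set V, X.Nonempty ∧ Xᶜ.Nonempty ∧ ∀ x ∈ X, ∀ y ∉ X, G.Adj x y := by
  obtain ⟨p, q, hpq⟩ : ∃ p q, ¬Gᶜ.Reachable p q := by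
    by_contra! h'
    exact h h'
  refine ⟨{x | Gᶜ.Reachable p x}, ⟨p, .rfl⟩, ⟨q, hpq⟩, fun x hx y hy => ?_⟩
  by_contra hxy
  exact hy (hx.trans (Adj.reachable ⟨fun h => hy (h ▸ hx), hxy⟩))

namespace IsRBColouring

variable {d : ℕ} {c : V → Bool}

theorem nontrivial (hc : IsRBColouring G d c) : Nontrivial V := by
  obtain ⟨⟨x, hx⟩, ⟨y, hy⟩, -⟩ := hc
  exact nontrivial_of_ne x y fun h => by simp_all

variable [Finite V]

theorem ncard_le_of_subset (hc : IsRBColouring G d c) {v : V} {S : Set V}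
    (hS : S ⊆ {u | G.Adj v u ∧ c u ≠ c v}) : S.ncard ≤ d :=
  (Set.ncard_le_ncard hS (Set.toFinite _)).trans (hc.2.2 v)

variable {X : Set V}

theorem ncard_ne_le_of_mem_of_not_mem (hc : IsRBColouring G d c)
    (hX : ∀ x ∈ X, ∀ y ∉ X, G.Adj x y) {x y : V} (hx : x ∈ X) (hy : y ∉ X) (hxy : c x = c y) :
    {u | c u ≠ c x}.ncard ≤ 2 * d := by
  have hsplit : {u | c u ≠ c x} ⊆
      {u | G.Adj y u ∧ c u ≠ c y} ∪ {u | G.Adj x u ∧ c u ≠ c x} := by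
    intro u hu
    by_cases huX : u ∈ X
    · exact .inl ⟨(hX u huX y hy).symm, hxy ▸ hu⟩
    · exact .inr ⟨hX x hx u huX, hu⟩
  calc {u | c u ≠ c x}.ncard
      ≤ {u | G.Adj y u ∧ c u ≠ c y}.ncard + {u | G.Adj x u ∧ c u ≠ c x}.ncard :=
        (Set.ncard_le_ncard hsplit (Set.toFinite _)).trans (Set.ncard_union_le _ _)
    _ ≤ d + d := add_le_add (hc.2.2 y) (hc.2.2 x)
    _ = 2 * d := by ring

theorem ncard_ne_le_of_forall_mem (hc : IsRBColouring G d c)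
    (hX : ∀ x ∈ X, ∀ y ∉ X, G.Adj x y) {x : V} (hx : x ∈ X) (hmono : ∀ u ∈ X, c u = c x) :
    {u | c u ≠ c x}.ncard ≤ d :=
  hc.ncard_le_of_subset fun u hu => ⟨hX x hx u fun huX => hu (hmono u huX), hu⟩

theorem exists_ncard_le_of_complete_cut (hc : IsRBColouring G d c) (hX₀ : X.Nonempty)
    (hX₁ : Xᶜ.Nonempty) (hX : ∀ x ∈ X, ∀ y ∉ X, G.Adj x y) :
    ∃ b, {u | c u ≠ b}.ncard ≤ 2 * d := by
  obtain ⟨x, hx⟩ := hX₀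
  obtain ⟨y, hy⟩ := hX₁
  by_cases hshared : ∃ x' ∈ X, ∃ y' ∉ X, c x' = c y'
  · obtain ⟨x', hx', y', hy', hxy⟩ := hshared
    exact ⟨c x', hc.ncard_ne_le_of_mem_of_not_mem hX hx' hy' hxy⟩
  push Not at hshared
  have hmono : ∀ u ∈ X, c u = c x := fun u hu =>
    (Bool.eq_not_iff.mpr (hshared u hu y hy)).trans (Bool.eq_not_iff.mpr (hshared x hx y hy)).symm
  exact ⟨c x, (hc.ncard_ne_le_of_forall_mem hX hx hmono).trans (by omega)⟩

end IsRBColouring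

end

theorem stmt1_general {V : Type*} [Fintype V] (G : SimpleGraph V) (hG : G.Connected)
    (hP4 : P4Free G) (d : ℕ) (c : V → Bool)
    (hc : IsRBColouring G d c) :
    {v | c v = true}.ncard ≤ 2 * d ∨ {v | c v = false}.ncard ≤ 2 * d := by
  have := hc.nontrivial
  obtain ⟨X, hX₀, hX₁, hX⟩ :=
    exists_complete_cut_of_not_preconnected_compl (hP4.not_preconnected_compl hG)
  obtain ⟨b, hb⟩ := hc.exists_ncard_le_of_complete_cut hX₀ hX₁ hX
  cases b <;> simp_all

theorem stmt1 {V : Type*} [Fintype V] (G : SimpleGraph V) (hG : G.Connected)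
    (hP4 : P4Free G) (d : ℕ) (hd : 1 ≤ d) (c : V → Bool)
    (hc : IsRBColouring G d c) :
    {v | c v = true}.ncard ≤ 2 * d ∨ {v | c v = false}.ncard ≤ 2 * d :=
  stmt1_general G hG hP4 d c hc
end

section
/- Every connected P4-free graph on at least two vertices admits a partition of its vertex set into two non-empty sets S1 and S2 such that every vertex of S1 is adjacent to every vertex of S2. -/
open SimpleGraph

section Aux

variable {V : Type*}

/-- Along a walk from `u` to `v` with `u ≠ v`, there is a neighbor `w` of `v`
reachable from `u` in the graph with `v` deleted. -/
lemma aux_walk_to_nbr (G : SimpleGraph V) (v : V) :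
    ∀ {u z : V}, G.Walk u z → z = v → ∀ hu : u ≠ v,
    ∃ w, ∃ hw : w ≠ v, G.Adj v w ∧
      (G.comap (Subtype.val : {x : V // x ≠ v} → V)).Reachable ⟨u, hu⟩ ⟨w, hw⟩ := by
  intro u z p
  induction p with
  | nil => intro hz hu; exact absurd hz hu
  | @cons a b c h q ih =>
    intro hz hu
    by_cases hb : b = v
    · exact ⟨a, hu, (hb ▸ h).symm, Reachable.refl _⟩
    · obtain ⟨w, hw, hvw, hr⟩ := ih hz hb
      refine ⟨w, hw, hvw, Reachable.trans (Adj.reachable ?_) hr⟩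
      exact h

/-- Along a walk in the deleted graph from a non-neighbor of `v` to a neighbor of `v`,
there is an edge `p q` with `p` a non-neighbor and `q` a neighbor of `v`. -/
lemma aux_first_nbr (G : SimpleGraph V) (v : V) :
    ∀ {x y : {z : V // z ≠ v}}, (G.comap (Subtype.val : {z : V // z ≠ v} → V)).Walk x y →
    ¬G.Adj v x.val → G.Adj v y.val →
    ∃ p q : {z : V // z ≠ v}, G.Adj p.val q.val ∧ ¬G.Adj v p.val ∧ G.Adj v q.val ∧
      (G.comap (Subtype.val : {z : V // z ≠ v} → V)).Reachable x p := by
  intro x y w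
  induction w with
  | nil => intro h1 h2; exact absurd h2 h1
  | @cons a b c h q ih =>
    intro h1 h2
    by_cases hb : G.Adj v b.val
    · exact ⟨a, b, h, h1, hb, Reachable.refl _⟩
    · obtain ⟨p, qq, h3, h4, h5, h6⟩ := ih hb h2
      exact ⟨p, qq, h3, h4, h5, (Adj.reachable h).trans h6⟩

lemma main_aux : ∀ (n : ℕ) (V : Type u) [Fintype V] (G : SimpleGraph V),
    Fintype.card V ≤ n → G.Connected → P4Free G → 2 ≤ Fintype.card V →
    ∃ S1 S2 : Set V, S1.Nonempty ∧ S2.Nonempty ∧ Disjoint S1 S2 ∧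
      S1 ∪ S2 = Set.univ ∧ ∀ a ∈ S1, ∀ b ∈ S2, G.Adj a b := by
  intro n
  induction n with
  | zero =>
    intro V _ G hn _ _ h2
    omega
  | succ n ih =>
    intro V _ G hn hG hP4 h2
    classical
    have hne : Nonempty V := Fintype.card_pos_iff.mp (by omega)
    obtain ⟨v⟩ := hne
    set V' := {x : V // x ≠ v} with hV'
    set G' : SimpleGraph V' := G.comap (Subtype.val : V' → V) with hG'def
    by_cases huniv : ∀ y : V, y ≠ v → G.Adj v y
    · refine ⟨{v}, {v}ᶜ, ⟨v, rfl⟩, ?_, disjoint_compl_right, Set.union_compl_self _, ?_⟩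
      · obtain ⟨u, hu⟩ := Fintype.exists_ne_of_one_lt_card (by omega) v
        exact ⟨u, by simpa using hu⟩
      · intro a ha b hb
        have ha' : a = v := ha
        subst ha'
        exact huniv b (by simpa using hb)
    push_neg at huniv
    obtain ⟨y1, hy1ne, hy1nadj⟩ := huniv
    -- every vertex ≠ v reaches a neighbor of v within the deleted graph
    have hnbr : ∀ (u : V) (hu : u ≠ v), ∃ w, ∃ hw : w ≠ v, G.Adj v w ∧
        G'.Reachable ⟨u, hu⟩ ⟨w, hw⟩ := by
      intro u hu
      obtain ⟨p⟩ := hG.preconnected u v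
      exact aux_walk_to_nbr G v p rfl hu
    -- the deleted graph is preconnected
    have hpre : ∀ x y : V', G'.Reachable x y := by
      by_contra hnp
      push_neg at hnp
      obtain ⟨x0, y0, hxy⟩ := hnp
      obtain ⟨w0, hw0ne, hw0adj, hw0r⟩ := hnbr x0.val x0.prop
      obtain ⟨w1, hw1ne, hw1adj, hw1r⟩ := hnbr y0.val y0.prop
      obtain ⟨w, hwne, hwadj, hwr⟩ := hnbr y1 hy1ne
      obtain ⟨pw⟩ := hwr
      obtain ⟨p, q, hpq, hvp, hvq, hreach⟩ := aux_first_nbr G v pw hy1nadj hwadj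
      have hz : ∃ z : V', G.Adj v z.val ∧ ¬G'.Reachable p z := by
        by_cases hc0 : G'.Reachable p ⟨w0, hw0ne⟩
        · refine ⟨⟨w1, hw1ne⟩, hw1adj, fun hc1 => hxy ?_⟩
          exact (hw0r.trans (hc0.symm.trans hc1)).trans hw1r.symm
        · exact ⟨⟨w0, hw0ne⟩, hw0adj, hc0⟩
      obtain ⟨z, hzadj, hzr⟩ := hz
      apply hP4
      refine ⟨p.val, q.val, v, z.val, hpq, hvq.symm, hzadj, ?_, ?_, ?_, p.prop, ?_, ?_⟩
      · exact fun h => hvp h.symm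
      · exact fun h => hzr (Adj.reachable (show G'.Adj p z from h))
      · exact fun h =>
          hzr ((Adj.reachable (show G'.Adj p q from hpq)).trans
            (Adj.reachable (show G'.Adj q z from h)))
      · exact fun h => hzr ((Subtype.ext h : p = z) ▸ Reachable.refl p)
      · intro h
        have : q = z := Subtype.ext h
        exact hzr (this ▸ (Adj.reachable (show G'.Adj p q from hpq)))
    -- the deleted graph is P4-free
    have hP4' : P4Free G' := by
      rintro ⟨a, b, c, d, h1, h2, h3, h4, h5, h6, h7, h8, h9⟩
      exact hP4 ⟨a.val, b.val, c.val, d.val, h1, h2, h3, h4, h5, h6,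
        fun h => h7 (Subtype.ext h), fun h => h8 (Subtype.ext h), fun h => h9 (Subtype.ext h)⟩
    have hcard' : Fintype.card V' = Fintype.card V - 1 := by
      simp [hV', Fintype.card_subtype_compl]
    by_cases h2' : 2 ≤ Fintype.card V'
    · have hG'conn : G'.Connected := by
        rw [connected_iff]
        exact ⟨hpre, ⟨⟨y1, hy1ne⟩⟩⟩
      obtain ⟨S1', S2', hS1ne, hS2ne, hdisj, hunion, hadj⟩ :=
        ih V' G' (by omega) hG'conn hP4' h2'
      have hmem_union : ∀ x : V', x ∈ S1' ∨ x ∈ S2' := by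
        intro x
        have : x ∈ S1' ∪ S2' := hunion ▸ Set.mem_univ x
        exact this
      by_cases hA : ∀ x ∈ S1', G.Adj v x.val
      · refine ⟨Subtype.val '' S1', insert v (Subtype.val '' S2'),
          hS1ne.image _, Set.insert_nonempty _ _, ?_, ?_, ?_⟩
        · rw [Set.disjoint_left]
          rintro a ⟨x, hx, rfl⟩ hmem
          rcases Set.mem_insert_iff.mp hmem with h | ⟨y, hy, hxy⟩
          · exact x.prop h
          · have : x = y := Subtype.ext hxy.symm
            exact (Set.disjoint_left.mp hdisj hx) (this ▸ hy)
        · ext y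
          simp only [Set.mem_union, Set.mem_insert_iff, Set.mem_image, Set.mem_univ, iff_true]
          by_cases hyv : y = v
          · exact Or.inr (Or.inl hyv)
          · rcases hmem_union ⟨y, hyv⟩ with h | h
            · exact Or.inl ⟨⟨y, hyv⟩, h, rfl⟩
            · exact Or.inr (Or.inr ⟨⟨y, hyv⟩, h, rfl⟩)
        · rintro a ⟨x, hx, rfl⟩ b hb
          rcases Set.mem_insert_iff.mp hb with h | ⟨y, hy, hby⟩
          · exact h ▸ (hA x hx).symm
          · exact hby ▸ (hadj x hx y hy : G.Adj x.val y.val)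
      by_cases hB : ∀ x ∈ S2', G.Adj v x.val
      · refine ⟨Subtype.val '' S2', insert v (Subtype.val '' S1'),
          hS2ne.image _, Set.insert_nonempty _ _, ?_, ?_, ?_⟩
        · rw [Set.disjoint_left]
          rintro a ⟨x, hx, rfl⟩ hmem
          rcases Set.mem_insert_iff.mp hmem with h | ⟨y, hy, hxy⟩
          · exact x.prop h
          · have : x = y := Subtype.ext hxy.symm
            exact (Set.disjoint_right.mp hdisj hx) (this ▸ hy)
        · ext y
          simp only [Set.mem_union, Set.mem_insert_iff, Set.mem_image, Set.mem_univ, iff_true]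
          by_cases hyv : y = v
          · exact Or.inr (Or.inl hyv)
          · rcases hmem_union ⟨y, hyv⟩ with h | h
            · exact Or.inr (Or.inr ⟨⟨y, hyv⟩, h, rfl⟩)
            · exact Or.inl ⟨⟨y, hyv⟩, h, rfl⟩
        · rintro a ⟨x, hx, rfl⟩ b hb
          rcases Set.mem_insert_iff.mp hb with h | ⟨y, hy, hby⟩
          · exact h ▸ (hB x hx).symm
          · exact hby ▸ (hadj y hy x hx : G.Adj y.val x.val).symm
      push_neg at hA hB
      obtain ⟨a', ha'mem, ha'nadj⟩ := hA
      obtain ⟨b', hb'mem, hb'nadj⟩ := hB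
      refine ⟨{x | G.Adj v x}, {x | G.Adj v x}ᶜ, ?_, ⟨v, by simp⟩,
        disjoint_compl_right, Set.union_compl_self _, ?_⟩
      · obtain ⟨w, hwne, hwadj, _⟩ := hnbr y1 hy1ne
        exact ⟨w, hwadj⟩
      · intro c hc y hy
        have hc : G.Adj v c := hc
        have hy : ¬G.Adj v y := hy
        by_cases hyv : y = v
        · exact hyv ▸ hc.symm
        have hcv : c ≠ v := fun h => G.irrefl (h ▸ hc)
        by_contra hcy
        rcases hmem_union ⟨c, hcv⟩ with hc1 | hc2
        · rcases hmem_union ⟨y, hyv⟩ with hy1' | hy2'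
          · -- both in S1' : P4  y - b' - c - v
            exact hP4 ⟨y, b'.val, c, v,
              (hadj _ hy1' b' hb'mem : G.Adj y b'.val),
              (hadj _ hc1 b' hb'mem : G.Adj c b'.val).symm,
              hc.symm,
              fun h => hcy h.symm,
              fun h => hy h.symm,
              fun h => hb'nadj h.symm,
              fun h => hy (h ▸ hc),
              hyv,
              b'.prop⟩
          · exact hcy (hadj _ hc1 _ hy2' : G.Adj c y)
        · rcases hmem_union ⟨y, hyv⟩ with hy1' | hy2'
          · exact hcy (hadj _ hy1' _ hc2 : G.Adj y c).symm
          · -- both in S2' : P4  y - a' - c - v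
            exact hP4 ⟨y, a'.val, c, v,
              (hadj a' ha'mem _ hy2' : G.Adj a'.val y).symm,
              (hadj a' ha'mem _ hc2 : G.Adj a'.val c),
              hc.symm,
              fun h => hcy h.symm,
              fun h => hy h.symm,
              fun h => ha'nadj h.symm,
              fun h => hy (h ▸ hc),
              hyv,
              a'.prop⟩
    · -- card V' ≤ 1 : impossible since v has both a neighbor and a non-neighbor ≠ v
      exfalso
      obtain ⟨w, hwne, hwadj, _⟩ := hnbr y1 hy1ne
      have h1 : Fintype.card V' ≤ 1 := by omega
      have hsub : (⟨y1, hy1ne⟩ : V') = ⟨w, hwne⟩ :=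
        Fintype.card_le_one_iff.mp h1 _ _
      have : y1 = w := congrArg Subtype.val hsub
      exact hy1nadj (this ▸ hwadj)

end Aux

theorem stmt2 {V : Type*} [Fintype V] (G : SimpleGraph V) (hG : G.Connected)
    (hP4 : P4Free G) (hcard : 2 ≤ Fintype.card V) :
    ∃ S1 S2 : Set V, S1.Nonempty ∧ S2.Nonempty ∧ Disjoint S1 S2 ∧
      S1 ∪ S2 = Set.univ ∧ ∀ a ∈ S1, ∀ b ∈ S2, G.Adj a b := by
  exact main_aux (Fintype.card V) V G le_rfl hG hP4 hcard
end

section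
/- Every connected P4-free graph on at least two vertices has a dominating edge, i.e., an edge uv such that every other vertex is adjacent to u or to v. -/
open SimpleGraph

private lemma walk_closure {V : Type*} (G : SimpleGraph V) (S : Set V)
    (hclosed : ∀ a b : V, G.Adj a b → a ∈ S → b ∈ S) :
    ∀ {x y : V}, G.Walk x y → x ∈ S → y ∈ S := by
  intro x y p
  induction p with
  | nil => exact id
  | cons h _ ih => exact fun hx => ih (hclosed _ _ h hx)

private lemma key_lemma {V : Type*} [Fintype V] [DecidableEq V] (G : SimpleGraph V)
    [DecidableRel G.Adj] (hP4 : P4Free G) (u v x b : V) (huv : G.Adj u v)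
    (hmax : ∀ a c : V, G.Adj a c →
      (Finset.univ.filter (fun w => G.Adj w a ∨ G.Adj w c)).card ≤
      (Finset.univ.filter (fun w => G.Adj w u ∨ G.Adj w v)).card)
    (hxu : ¬ G.Adj x u) (hxv : ¬ G.Adj x v) (hxune : x ≠ u) (hxvne : x ≠ v)
    (hbx : G.Adj b x) (hbu : G.Adj b u) : False := by
  by_cases hbv : G.Adj b v
  · -- edge (u, b) dominates strictly more
    have hsub : (Finset.univ.filter (fun w => G.Adj w u ∨ G.Adj w v)) ⊆
        (Finset.univ.filter (fun w => G.Adj w u ∨ G.Adj w b)) := by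
      intro z hz
      simp only [Finset.mem_filter, Finset.mem_univ, true_and] at hz ⊢
      rcases hz with hzu | hzv
      · exact Or.inl hzu
      by_cases hzu : G.Adj z u
      · exact Or.inl hzu
      by_cases hzb : G.Adj z b
      · exact Or.inr hzb
      exfalso
      by_cases hzx : G.Adj z x
      · exact hP4 ⟨u, v, z, x, huv, hzv.symm, hzx, fun h => hzu h.symm,
          fun h => hxu h.symm, fun h => hxv h.symm,
          fun h => hzb (h ▸ hbu.symm), hxune.symm, hxvne.symm⟩
      · refine hP4 ⟨z, v, b, x, hzv, hbv.symm, hbx, hzb, hzx,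
          fun h => hxv h.symm, ?_, ?_, hxvne.symm⟩
        · intro h; exact hzx (h ▸ hbx)
        · intro h; exact hxv (h ▸ hzv)
    have hss : (Finset.univ.filter (fun w => G.Adj w u ∨ G.Adj w v)) ⊂
        (Finset.univ.filter (fun w => G.Adj w u ∨ G.Adj w b)) := by
      refine ⟨hsub, fun h => ?_⟩
      have hx : x ∈ (Finset.univ.filter (fun w => G.Adj w u ∨ G.Adj w b)) := by
        simp only [Finset.mem_filter, Finset.mem_univ, true_and]
        exact Or.inr hbx.symm
      have := h hx
      simp only [Finset.mem_filter, Finset.mem_univ, true_and] at this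
      tauto
    exact absurd (hmax u b hbu.symm) (not_le.mpr (Finset.card_lt_card hss))
  · -- x b u v is an induced P4
    exact hP4 ⟨x, b, u, v, hbx.symm, hbu, huv, hxu, hxv, hbv, hxune, hxvne,
      fun h => hxv (h ▸ hbx).symm⟩

theorem stmt3 {V : Type*} [Fintype V] (G : SimpleGraph V) (hG : G.Connected)
    (hP4 : P4Free G) (hcard : 2 ≤ Fintype.card V) :
    ∃ u v : V, G.Adj u v ∧ ∀ w : V, w ≠ u → w ≠ v → G.Adj w u ∨ G.Adj w v := by
  classical
  -- there exists an edge
  obtain ⟨a, b, hne⟩ := Fintype.exists_pair_of_one_lt_card hcard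
  obtain ⟨p⟩ := hG.preconnected a b
  have hedge : ∃ a b : V, G.Adj a b := by
    cases p with
    | nil => exact absurd rfl hne
    | cons h _ => exact ⟨_, _, h⟩
  -- pick the edge maximizing the number of dominated vertices
  have hS : (Finset.univ.filter (fun p : V × V => G.Adj p.1 p.2)).Nonempty := by
    obtain ⟨a, b, hab⟩ := hedge
    exact ⟨(a, b), by simp [hab]⟩
  obtain ⟨⟨u, v⟩, hmem, hmax⟩ := Finset.exists_max_image _
    (fun p : V × V => (Finset.univ.filter (fun w => G.Adj w p.1 ∨ G.Adj w p.2)).card) hS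
  simp only [Finset.mem_filter, Finset.mem_univ, true_and] at hmem
  have hmax' : ∀ a c : V, G.Adj a c →
      (Finset.univ.filter (fun w => G.Adj w a ∨ G.Adj w c)).card ≤
      (Finset.univ.filter (fun w => G.Adj w u ∨ G.Adj w v)).card := by
    intro a c hac
    exact hmax (a, c) (by simp [hac])
  have hmaxsw : ∀ a c : V, G.Adj a c →
      (Finset.univ.filter (fun w => G.Adj w a ∨ G.Adj w c)).card ≤
      (Finset.univ.filter (fun w => G.Adj w v ∨ G.Adj w u)).card := by
    intro a c hac
    have heq : (Finset.univ.filter (fun w => G.Adj w v ∨ G.Adj w u)) =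
        (Finset.univ.filter (fun w => G.Adj w u ∨ G.Adj w v)) := by
      apply Finset.filter_congr; intro w _; simp [or_comm]
    rw [heq]; exact hmax' a c hac
  refine ⟨u, v, hmem, ?_⟩
  -- the set of dominated vertices is closed under adjacency
  set S : Set V := {x | G.Adj x u ∨ G.Adj x v ∨ x = u ∨ x = v} with hSdef
  have hclosed : ∀ c y : V, G.Adj c y → c ∈ S → y ∈ S := by
    intro c y h hc
    rcases hc with hcu | hcv | hcu' | hcv'
    · by_cases hxu : G.Adj y u
      · exact Or.inl hxu
      by_cases hxv : G.Adj y v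
      · exact Or.inr (Or.inl hxv)
      by_cases hyu : y = u
      · exact Or.inr (Or.inr (Or.inl hyu))
      by_cases hyv : y = v
      · exact Or.inr (Or.inr (Or.inr hyv))
      exact absurd (key_lemma G hP4 u v y c hmem hmax' hxu hxv hyu hyv h hcu) id
    · by_cases hxu : G.Adj y u
      · exact Or.inl hxu
      by_cases hxv : G.Adj y v
      · exact Or.inr (Or.inl hxv)
      by_cases hyu : y = u
      · exact Or.inr (Or.inr (Or.inl hyu))
      by_cases hyv : y = v
      · exact Or.inr (Or.inr (Or.inr hyv))
      exact absurd (key_lemma G hP4 v u y c hmem.symm hmaxsw hxv hxu hyv hyu h hcv) id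
    · exact Or.inl (hcu' ▸ h).symm
    · exact Or.inr (Or.inl (hcv' ▸ h).symm)
  intro w hwu hwv
  obtain ⟨p⟩ := hG.preconnected u w
  have hw : w ∈ S := walk_closure G S hclosed p (Or.inr (Or.inr (Or.inl rfl)))
  rcases hw with h | h | h | h
  · exact Or.inl h
  · exact Or.inr h
  · exact absurd h hwu
  · exact absurd h hwv
end

section
/- Let G be a connected graph, let P be a subset of vertices whose complement N = V(G) \ P is an independent set, and suppose G + F is (P1+P4)-free for some set F of edges with both endpoints in N. If Q ⊆ P induces a P4 in G, then Q dominates G, i.e., every vertex of G is in Q or adjacent to a vertex of Q. -/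
open SimpleGraph

/-- `G` has no induced subgraph isomorphic to `P1 + P4` (an isolated vertex together
with an induced path on 4 vertices). -/
def P1P4Free {V : Type*} (G : SimpleGraph V) : Prop :=
  ¬∃ z a b c d : V, IsInducedP4 G a b c d ∧
    ¬G.Adj z a ∧ ¬G.Adj z b ∧ ¬G.Adj z c ∧ ¬G.Adj z d ∧
    z ≠ a ∧ z ≠ b ∧ z ≠ c ∧ z ≠ d

theorem stmt4 {V : Type*} [Fintype V] (G F : SimpleGraph V) (P : Set V)
    (hG : G.Connected)
    (hN : ∀ u ∈ Pᶜ, ∀ v ∈ Pᶜ, ¬G.Adj u v)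
    (hF : ∀ u v : V, F.Adj u v → u ∈ Pᶜ ∧ v ∈ Pᶜ)
    (hfree : P1P4Free (G ⊔ F))
    (q1 q2 q3 q4 : V)
    (hq1 : q1 ∈ P) (hq2 : q2 ∈ P) (hq3 : q3 ∈ P) (hq4 : q4 ∈ P)
    (hP4 : IsInducedP4 G q1 q2 q3 q4) :
    ∀ v : V, v = q1 ∨ v = q2 ∨ v = q3 ∨ v = q4 ∨
      G.Adj v q1 ∨ G.Adj v q2 ∨ G.Adj v q3 ∨ G.Adj v q4 := by
  intro v
  by_contra h
  push_neg at h
  obtain ⟨h1, h2, h3, h4, h5, h6, h7, h8⟩ := h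
  obtain ⟨a12, a23, a34, n13, n14, n24, d13, d14, d24⟩ := hP4
  -- F has no edge touching any qᵢ (they are in P)
  have hFq : ∀ (x y : V), y ∈ P → ¬F.Adj x y := fun x y hy hxy =>
    (hF x y hxy).2 hy
  apply hfree
  refine ⟨v, q1, q2, q3, q4, ⟨?_, ?_, ?_, ?_, ?_, ?_, d13, d14, d24⟩,
    ?_, ?_, ?_, ?_, h1, h2, h3, h4⟩
  · exact Or.inl a12
  · exact Or.inl a23
  · exact Or.inl a34
  · rintro (h | h); exacts [n13 h, hFq q1 q3 hq3 h]
  · rintro (h | h); exacts [n14 h, hFq q1 q4 hq4 h]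
  · rintro (h | h); exacts [n24 h, hFq q2 q4 hq4 h]
  · rintro (h | h); exacts [h5 h, hFq v q1 hq1 h]
  · rintro (h | h); exacts [h6 h, hFq v q2 hq2 h]
  · rintro (h | h); exacts [h7 h, hFq v q3 hq3 h]
  · rintro (h | h); exacts [h8 h, hFq v q4 hq4 h]
end

section
/- With G, P, N, F, and components C1,…,Cr (r ≥ 3) as above, any vertex v ∈ N that is anti-complete to some component Ch and has neighbours in at least two other components is complete to every component in which it has a neighbour. -/
open SimpleGraph

lemma walk_frontier {V : Type*} (G : SimpleGraph V) (S : Set V) (v : V) :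
    ∀ {x y : S}, (G.induce S).Walk x y → G.Adj v x → ¬ G.Adj v y →
    ∃ a b : V, a ∈ S ∧ b ∈ S ∧ G.Adj a b ∧ G.Adj v a ∧ ¬ G.Adj v b := by
  intro x y p
  induction p with
  | nil => intro hx hy; exact absurd hx hy
  | @cons x x' y hadj p ih =>
    intro hx hy
    by_cases hvx' : G.Adj v x'
    · exact ih hvx' hy
    · exact ⟨x, x', x.2, x'.2, hadj, hx, hvx'⟩

theorem stmt6 {V : Type*} [Fintype V] (G F : SimpleGraph V)
    (r : ℕ) (hr : 3 ≤ r) (C : Fin r → Set V) (P : Set V)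
    (hP : P = ⋃ i, C i)
    (hne : ∀ i, (C i).Nonempty)
    (hdisj : ∀ i j, i ≠ j → Disjoint (C i) (C j))
    (hconn : ∀ i, (G.induce (C i)).Connected)
    (hsep : ∀ i j, i ≠ j → ∀ u ∈ C i, ∀ v ∈ C j, ¬G.Adj u v)
    (hind : ∀ u ∈ Pᶜ, ∀ v ∈ Pᶜ, ¬G.Adj u v)
    (hF : ∀ u v : V, F.Adj u v → u ∈ Pᶜ ∧ v ∈ Pᶜ)
    (hfree : P1P4Free (G ⊔ F))
    (v : V) (hv : v ∈ Pᶜ)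
    (h : Fin r) (hanti : ∀ w ∈ C h, ¬G.Adj v w)
    (i j : Fin r) (hij : i ≠ j) (hih : i ≠ h) (hjh : j ≠ h)
    (hvi : ∃ w ∈ C i, G.Adj v w) (hvj : ∃ w ∈ C j, G.Adj v w) :
    ∀ k, (∃ w ∈ C k, G.Adj v w) → ∀ w ∈ C k, G.Adj v w := by
  have hmem : ∀ (t : Fin r) (x : V), x ∈ C t → x ∈ P := by
    intro t x hx; rw [hP]; exact Set.mem_iUnion.mpr ⟨t, hx⟩
  have hvP : v ∉ P := hv
  rintro k ⟨a0, ha0, hva0⟩ w hw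
  by_contra hvw
  -- k ≠ h
  have hkh : k ≠ h := by
    rintro rfl; exact hanti a0 ha0 hva0
  -- find frontier edge in C k
  obtain ⟨a, b, haS, hbS, hab, hva, hvb⟩ :
      ∃ a b : V, a ∈ C k ∧ b ∈ C k ∧ G.Adj a b ∧ G.Adj v a ∧ ¬ G.Adj v b := by
    obtain ⟨p⟩ := ((hconn k).preconnected ⟨a0, ha0⟩ ⟨w, hw⟩)
    exact walk_frontier G (C k) v p hva0 hvw
  -- pick m ∈ {i,j}, m ≠ k, m ≠ h, with neighbor c in C m
  obtain ⟨m, hmk, hmh, c, hc, hvc⟩ :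
      ∃ m : Fin r, m ≠ k ∧ m ≠ h ∧ ∃ c ∈ C m, G.Adj v c := by
    by_cases hki : k = i
    · exact ⟨j, by rw [hki]; exact hij.symm, hjh, hvj⟩
    · exact ⟨i, fun e => hki e.symm, hih, hvi⟩
  obtain ⟨z, hz⟩ := hne h
  -- no adjacency in G ⊔ F between P-vertices of distinct components
  have noadj : ∀ (s t : Fin r), s ≠ t → ∀ x ∈ C s, ∀ y ∈ C t, ¬(G ⊔ F).Adj x y := by
    intro s t hst x hx y hy hxy
    rcases hxy with hxy | hxy
    · exact hsep s t hst x hx y hy hxy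
    · exact (hF x y hxy).1 (hmem s x hx)
  have noadjv : ∀ x ∈ P, ¬ G.Adj v x → ¬(G ⊔ F).Adj x v := by
    intro x hx hgx hxy
    rcases hxy with hxy | hxy
    · exact hgx hxy.symm
    · exact (hF x v hxy).1 hx
  have neq : ∀ (s t : Fin r), s ≠ t → ∀ x ∈ C s, ∀ y ∈ C t, x ≠ y := by
    intro s t hst x hx y hy rfl
    exact (hdisj s t hst).ne_of_mem hx hy rfl
  have nev : ∀ (t : Fin r), ∀ x ∈ C t, x ≠ v := by
    rintro t x hx rfl; exact hvP (hmem t x hx)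
  refine hfree ⟨z, b, a, v, c, ⟨?_, ?_, ?_, ?_, ?_, ?_, ?_, ?_, ?_⟩,
    ?_, ?_, ?_, ?_, ?_, ?_, ?_, ?_⟩
  · exact Or.inl hab.symm
  · exact Or.inl hva.symm
  · exact Or.inl hvc
  · exact fun hbv => noadjv b (hmem k b hbS) hvb hbv
  · exact noadj k m (fun e => hmk e.symm) b hbS c hc
  · intro hac
    rcases hac with hac | hac
    · exact hsep k m (fun e => hmk e.symm) a haS c hc hac
    · exact (hF a c hac).1 (hmem k a haS)
  · exact nev k b hbS
  · exact neq k m (fun e => hmk e.symm) b hbS c hc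
  · exact neq k m (fun e => hmk e.symm) a haS c hc
  · exact noadj h k hkh.symm z hz b hbS
  · exact noadj h k hkh.symm z hz a haS
  · exact noadjv z (hmem h z hz) (hanti z hz)
  · exact noadj h m (fun e => hmh e.symm) z hz c hc
  · exact neq h k hkh.symm z hz b hbS
  · exact neq h k hkh.symm z hz a haS
  · exact nev h z hz
  · exact neq h m (fun e => hmh e.symm) z hz c hc
end

section
/- Let G be a connected graph and let G' be obtained from G by replacing every edge uv with two new vertices x1_uv, x2_uv and edges u x1_uv, u x2_uv, v x1_uv, v x2_uv (deleting the edge uv). Then G has a matching cut if and only if G' has a matching cut. -/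
open SimpleGraph

/-- `G` has a matching cut (1-cut): a partition into two non-empty parts with every
vertex having at most one neighbour on the other side. -/
def HasMatchingCut {V : Type*} (G : SimpleGraph V) : Prop :=
  ∃ B : Set V, B.Nonempty ∧ Bᶜ.Nonempty ∧
    (∀ v ∈ B, {u ∈ Bᶜ | G.Adj v u}.ncard ≤ 1) ∧
    (∀ v ∈ Bᶜ, {u ∈ B | G.Adj v u}.ncard ≤ 1)

/-- The graph obtained from `G` by replacing every edge `uv` with two new
vertices `x¹_uv, x²_uv` adjacent to both `u` and `v` (the edge `uv` is deleted). -/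
def Moshi {V : Type*} (G : SimpleGraph V) :
    SimpleGraph (V ⊕ ({e : Sym2 V // e ∈ G.edgeSet} × Fin 2)) :=
  SimpleGraph.fromRel (fun a b =>
    match a, b with
    | Sum.inl u, Sum.inr (e, _) => u ∈ (e : Sym2 V)
    | _, _ => False)

/-!
Given a matching cut of `G`, keep the original vertices where they are, put both subdivision
vertices of an uncut edge on that edge's side, and split the two subdivision vertices of a cut
edge between the sides: an original vertex then has exactly one crossing neighbour per cut edge
at it, and a subdivision vertex at most one. Conversely, restrict a matching cut of `Moshi G` to
the original vertices. A subdivision vertex cannot have both ends of its edge across from it, so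
both sides stay non-empty; and a cut edge `uv` of the restriction has a subdivision vertex across
from `u` (otherwise both would be across from `v`), so two cut edges at `u` would give two
crossing neighbours of `u` in `Moshi G`.
-/

namespace SimpleGraph

variable {V : Type*} (G : SimpleGraph V)

def crossingNeighborSet (B : Set V) (v : V) : Set V := {u | G.Adj v u ∧ (u ∈ B ↔ v ∉ B)}

def IsMatchingCut (B : Set V) : Prop :=
  B.Nonempty ∧ Bᶜ.Nonempty ∧ ∀ v, (G.crossingNeighborSet B v).Subsingleton

variable {G}

lemma crossingNeighborSet_of_mem {B : Set V} {v : V} (hv : v ∈ B) :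
    G.crossingNeighborSet B v = {u ∈ Bᶜ | G.Adj v u} := by
  ext u; simp [crossingNeighborSet, hv, and_comm]

lemma crossingNeighborSet_of_notMem {B : Set V} {v : V} (hv : v ∉ B) :
    G.crossingNeighborSet B v = {u ∈ B | G.Adj v u} := by
  ext u; simp [crossingNeighborSet, hv, and_comm]

end SimpleGraph

theorem hasMatchingCut_iff {V : Type*} [Finite V] (G : SimpleGraph V) :
    HasMatchingCut G ↔ ∃ B, G.IsMatchingCut B := by
  simp only [HasMatchingCut, IsMatchingCut, Set.ncard_le_one_iff_subsingleton]
  refine exists_congr fun B => and_congr_right' <| and_congr_right' ⟨?_, fun h => ?_⟩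
  · rintro ⟨hB, hBc⟩ v
    by_cases hv : v ∈ B
    · rw [crossingNeighborSet_of_mem hv]; exact hB v hv
    · rw [crossingNeighborSet_of_notMem hv]; exact hBc v hv
  · exact ⟨fun v hv => crossingNeighborSet_of_mem hv ▸ h v,
      fun v hv => crossingNeighborSet_of_notMem hv ▸ h v⟩

namespace Moshi

open Sum

variable {V : Type*} {G : SimpleGraph V} {B : Set V}
  {D : Set (V ⊕ ({e : Sym2 V // e ∈ G.edgeSet} × Fin 2))}

@[simp]
lemma adj_inl_inr {u : V} {x : {e : Sym2 V // e ∈ G.edgeSet} × Fin 2} :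
    (Moshi G).Adj (inl u) (inr x) ↔ u ∈ (x.1 : Sym2 V) := by
  simp [Moshi]

@[simp]
lemma adj_inr_inl {x : {e : Sym2 V // e ∈ G.edgeSet} × Fin 2} {u : V} :
    (Moshi G).Adj (inr x) (inl u) ↔ u ∈ (x.1 : Sym2 V) := by
  simp [Moshi]

@[simp]
lemma not_adj_inl_inl {u v : V} : ¬ (Moshi G).Adj (inl u) (inl v) := by
  simp [Moshi]

@[simp]
lemma not_adj_inr_inr {x y : {e : Sym2 V // e ∈ G.edgeSet} × Fin 2} :
    ¬ (Moshi G).Adj (inr x) (inr y) := by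
  simp [Moshi]

variable (G) in
def moshiCut (B : Set V) : Set (V ⊕ ({e : Sym2 V // e ∈ G.edgeSet} × Fin 2)) :=
  {a | Sum.elim (· ∈ B)
    (fun x => (x.2 = 0 ∧ ∃ w ∈ (x.1 : Sym2 V), w ∈ B) ∨ ∀ w ∈ (x.1 : Sym2 V), w ∈ B) a}

@[simp]
lemma inl_mem_moshiCut {u : V} : inl u ∈ moshiCut G B ↔ u ∈ B := Iff.rfl

lemma inr_mem_moshiCut {u v : V} (h : s(u, v) ∈ G.edgeSet) (i : Fin 2) :
    inr (⟨s(u, v), h⟩, i) ∈ moshiCut G B ↔ (i = 0 ∧ (u ∈ B ∨ v ∈ B)) ∨ (u ∈ B ∧ v ∈ B) := by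
  simp [moshiCut]

lemma inr_mem_moshiCut_of_iff {u v : V} (huv : u ∈ B ↔ v ∈ B)
    (h : s(u, v) ∈ G.edgeSet) (i : Fin 2) :
    inr (⟨s(u, v), h⟩, i) ∈ moshiCut G B ↔ u ∈ B := by
  rw [inr_mem_moshiCut]; tauto

lemma inr_mem_moshiCut_of_iff_not {u v : V} (huv : u ∈ B ↔ v ∉ B)
    (h : s(u, v) ∈ G.edgeSet) (i : Fin 2) :
    inr (⟨s(u, v), h⟩, i) ∈ moshiCut G B ↔ i = 0 := by
  rw [inr_mem_moshiCut]; tauto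

lemma exists_eq_of_mem_crossingNeighborSet_moshiCut_inl {u : V}
    {a : V ⊕ ({e : Sym2 V // e ∈ G.edgeSet} × Fin 2)}
    (ha : a ∈ (Moshi G).crossingNeighborSet (moshiCut G B) (inl u)) :
    ∃ v h i, a = inr (⟨s(u, v), h⟩, i) ∧ v ∈ G.crossingNeighborSet B u ∧ (i = 0 ↔ u ∉ B) := by
  obtain ⟨hadj, hcross⟩ := ha
  rcases a with w | ⟨⟨e, he⟩, i⟩
  · exact absurd hadj not_adj_inl_inl
  obtain ⟨v, rfl⟩ := Sym2.mem_iff_exists.mp (adj_inl_inr.mp hadj)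
  have hvu : v ∈ B ↔ u ∉ B := by
    by_contra h
    rw [inr_mem_moshiCut_of_iff (by tauto)] at hcross
    simp at hcross
  rw [inr_mem_moshiCut_of_iff_not (by tauto)] at hcross
  exact ⟨v, he, i, rfl, ⟨he, hvu⟩, by simpa using hcross⟩

lemma isMatchingCut_moshiCut (hB : G.IsMatchingCut B) :
    (Moshi G).IsMatchingCut (moshiCut G B) := by
  obtain ⟨⟨b, hb⟩, ⟨c, hc⟩, hsub⟩ := hB
  refine ⟨⟨inl b, hb⟩, ⟨inl c, hc⟩, ?_⟩
  rintro (u | ⟨⟨e, he⟩, i⟩)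
  · intro a ha a' ha'
    obtain ⟨v, h, i, rfl, hv, hi⟩ := exists_eq_of_mem_crossingNeighborSet_moshiCut_inl ha
    obtain ⟨v', h', i', rfl, hv', hi'⟩ := exists_eq_of_mem_crossingNeighborSet_moshiCut_inl ha'
    obtain rfl := hsub u hv hv'
    have : i = i' := by fin_cases i <;> fin_cases i' <;> simp_all
    rw [this]
  · induction e using Sym2.ind with | _ u v => ?_
    rintro (w | y) ⟨hw, hwx⟩ (w' | y') ⟨hw', hwx'⟩
    all_goals simp only [not_adj_inr_inr, adj_inr_inl, Sym2.mem_iff] at hw hw'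
    -- two distinct crossing neighbours would be `u` and `v`, on one side, which `moshiCut` then
    -- puts the subdivision vertex on as well
    by_contra hne
    have huv : u ∈ B ↔ v ∈ B := by
      rcases hw with rfl | rfl <;> rcases hw' with rfl | rfl <;> simp_all
    rw [inr_mem_moshiCut_of_iff huv] at hwx hwx'
    rcases hw with rfl | rfl <;> simp_all

lemma inl_mem_iff_inr_mem_of_subsingleton {u v : V} (h : s(u, v) ∈ G.edgeSet) {i : Fin 2}
    (hD : ((Moshi G).crossingNeighborSet D (inr (⟨s(u, v), h⟩, i))).Subsingleton) :
    (inl u ∈ D ↔ inr (⟨s(u, v), h⟩, i) ∈ D) ∨ (inl v ∈ D ↔ inr (⟨s(u, v), h⟩, i) ∈ D) := by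
  by_contra hcross
  have huv : inl u = inl v := hD
    ⟨adj_inr_inl.mpr (Sym2.mem_mk_left u v), by tauto⟩
    ⟨adj_inr_inl.mpr (Sym2.mem_mk_right u v), by tauto⟩
  exact (G.mem_edgeSet.mp h).ne (inl_injective huv)

lemma exists_inl_mem_iff (hD : ∀ a, ((Moshi G).crossingNeighborSet D a).Subsingleton)
    (a : V ⊕ ({e : Sym2 V // e ∈ G.edgeSet} × Fin 2)) : ∃ u, (inl u ∈ D ↔ a ∈ D) := by
  rcases a with u | ⟨⟨e, he⟩, i⟩
  · exact ⟨u, Iff.rfl⟩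
  induction e using Sym2.ind with | _ u v => ?_
  rcases inl_mem_iff_inr_mem_of_subsingleton he (hD _) with h | h
  exacts [⟨u, h⟩, ⟨v, h⟩]

lemma exists_mem_crossingNeighborSet_inl
    (hD : ∀ a, ((Moshi G).crossingNeighborSet D a).Subsingleton) {u v : V}
    (hv : v ∈ G.crossingNeighborSet (inl ⁻¹' D) u) :
    ∃ i, inr (⟨s(u, v), hv.1⟩, i) ∈ (Moshi G).crossingNeighborSet D (inl u) := by
  by_contra hno
  have hsame (i : Fin 2) : inr (⟨s(u, v), hv.1⟩, i) ∈ D ↔ inl u ∈ D := by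
    by_contra h
    exact hno ⟨i, adj_inl_inr.mpr (Sym2.mem_mk_left u v), by tauto⟩
  have hvu : inl v ∈ D ↔ inl u ∉ D := hv.2
  have hcross (i : Fin 2) :
      inr (⟨s(u, v), hv.1⟩, i) ∈ (Moshi G).crossingNeighborSet D (inl v) :=
    ⟨adj_inl_inr.mpr (Sym2.mem_mk_right u v), by have := hsame i; tauto⟩
  simpa using hD (inl v) (hcross 0) (hcross 1)

lemma isMatchingCut_preimage_inl (hD : (Moshi G).IsMatchingCut D) :
    G.IsMatchingCut (inl ⁻¹' D) := by
  obtain ⟨⟨a, ha⟩, ⟨b, hb⟩, hsub⟩ := hD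
  obtain ⟨u, hu⟩ := exists_inl_mem_iff hsub a
  obtain ⟨w, hw⟩ := exists_inl_mem_iff hsub b
  refine ⟨⟨u, hu.mpr ha⟩, ⟨w, mt hw.mp hb⟩, fun u v hv v' hv' => ?_⟩
  obtain ⟨i, hi⟩ := exists_mem_crossingNeighborSet_inl hsub hv
  obtain ⟨i', hi'⟩ := exists_mem_crossingNeighborSet_inl hsub hv'
  exact Sym2.congr_right.mp (congrArg (·.1.1) (inr_injective (hsub (inl u) hi hi')))

end Moshi

theorem stmt7_general {V : Type*} [Fintype V] (G : SimpleGraph V) :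
    HasMatchingCut G ↔ HasMatchingCut (Moshi G) := by
  rw [hasMatchingCut_iff, hasMatchingCut_iff]
  exact ⟨fun ⟨B, hB⟩ => ⟨_, Moshi.isMatchingCut_moshiCut hB⟩,
    fun ⟨D, hD⟩ => ⟨_, Moshi.isMatchingCut_preimage_inl hD⟩⟩

theorem stmt7 {V : Type*} [Fintype V] (G : SimpleGraph V) (hG : G.Connected) :
    HasMatchingCut G ↔ HasMatchingCut (Moshi G) :=
  stmt7_general G
end

section
/- Let G be a graph, d ≥ 1, and (X,Y) disjoint vertex sets. If a vertex v ∉ X ∪ Y has at least d+1 neighbours in X, then G has a red-blue d-colouring with all of X red and all of Y blue if and only if G has a red-blue d-colouring with all of X ∪ {v} red and all of Y blue. -/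
open SimpleGraph

/-- A red-blue `(X,Y)`-`d`-colouring: a red-blue `d`-colouring in which all vertices of
`X` are red (`true`) and all vertices of `Y` are blue (`false`). -/
def IsRBXYColouring {V : Type*} (G : SimpleGraph V) (d : ℕ) (X Y : Set V)
    (c : V → Bool) : Prop :=
  IsRBColouring G d c ∧ (∀ x ∈ X, c x = true) ∧ (∀ y ∈ Y, c y = false)

theorem stmt13 {V : Type*} [Fintype V] (G : SimpleGraph V) (d : ℕ) (hd : 1 ≤ d)
    (X Y : Set V) (hXY : Disjoint X Y) (v : V) (hv : v ∉ X ∪ Y)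
    (hdeg : d + 1 ≤ {u ∈ X | G.Adj v u}.ncard) :
    (∃ c : V → Bool, IsRBXYColouring G d X Y c) ↔
      (∃ c : V → Bool, IsRBXYColouring G d (insert v X) Y c) := by
  constructor
  · rintro ⟨c, ⟨hc, hX, hY⟩⟩
    refine ⟨c, hc, ?_, hY⟩
    intro x hx
    rcases hx with rfl | hx
    · by_contra hvf
      have hvf' : c x = false := by
        cases h : c x
        · rfl
        · exact absurd h hvf
      have hsub : {u ∈ X | G.Adj x u} ⊆ {u | G.Adj x u ∧ c u ≠ c x} := by
        intro u hu
        exact ⟨hu.2, by simp [hX u hu.1, hvf']⟩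
      have := Set.ncard_le_ncard hsub (Set.toFinite _)
      have := hc.2.2 x
      omega
    · exact hX x hx
  · rintro ⟨c, ⟨hc, hX, hY⟩⟩
    exact ⟨c, hc, fun x hx => hX x (Or.inr hx), hY⟩
end

section
/- Let G, P, N, F be as in the probe (P1+P4)-free setting with components C1,…,Cr of G[P], r ≥ 3, and suppose all vertices of N having neighbours in at least two components are of type-C (complete or anti-complete to each Ci, complete to at least two). If u and v are type-C vertices such that u is complete to Ch and anti-complete to Ci, v is anti-complete to Ch and complete to Ci, and both are complete to some Cj, then {u,v} is a P-dominating pair: every Ck is complete to u or to v. -/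
open SimpleGraph

/-- `v` is a type-C vertex: it belongs to `N`, is complete or anti-complete to each
component `C i`, and is complete to at least two of them. -/
def TypeC {V : Type*} (G : SimpleGraph V) {r : ℕ} (C : Fin r → Set V) (P : Set V)
    (v : V) : Prop :=
  v ∈ Pᶜ ∧ (∀ i, (∀ w ∈ C i, G.Adj v w) ∨ (∀ w ∈ C i, ¬G.Adj v w)) ∧
    ∃ i j, i ≠ j ∧ (∀ w ∈ C i, G.Adj v w) ∧ (∀ w ∈ C j, G.Adj v w)

theorem stmt16 {V : Type*} [Fintype V] (G F : SimpleGraph V)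
    (r : ℕ) (hr : 3 ≤ r) (C : Fin r → Set V) (P : Set V)
    (hP : P = ⋃ i, C i)
    (hne : ∀ i, (C i).Nonempty)
    (hdisj : ∀ i j, i ≠ j → Disjoint (C i) (C j))
    (hconn : ∀ i, (G.induce (C i)).Connected)
    (hsep : ∀ i j, i ≠ j → ∀ u ∈ C i, ∀ v ∈ C j, ¬G.Adj u v)
    (hind : ∀ u ∈ Pᶜ, ∀ v ∈ Pᶜ, ¬G.Adj u v)
    (hF : ∀ u v : V, F.Adj u v → u ∈ Pᶜ ∧ v ∈ Pᶜ)
    (hfree : P1P4Free (G ⊔ F))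
    (hallC : ∀ x ∈ Pᶜ, (∃ i j, i ≠ j ∧ (∃ w ∈ C i, G.Adj x w) ∧ (∃ w ∈ C j, G.Adj x w)) →
      TypeC G C P x)
    (u v : V) (hu : TypeC G C P u) (hv : TypeC G C P v)
    (h i j : Fin r) (hhi : h ≠ i)
    (huh : ∀ w ∈ C h, G.Adj u w) (hui : ∀ w ∈ C i, ¬G.Adj u w)
    (hvh : ∀ w ∈ C h, ¬G.Adj v w) (hvi : ∀ w ∈ C i, G.Adj v w)
    (huj : ∀ w ∈ C j, G.Adj u w) (hvj : ∀ w ∈ C j, G.Adj v w) :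
    ∀ k, (∀ w ∈ C k, G.Adj u w) ∨ (∀ w ∈ C k, G.Adj v w) := by
  intro k
  by_contra hcon
  push_neg at hcon
  obtain ⟨hcu, hcv⟩ := hcon
  have huk : ∀ w ∈ C k, ¬G.Adj u w := (hu.2.1 k).resolve_left (by
    intro hall; obtain ⟨w, hw, hnadj⟩ := hcu; exact hnadj (hall w hw))
  have hvk : ∀ w ∈ C k, ¬G.Adj v w := (hv.2.1 k).resolve_left (by
    intro hall; obtain ⟨w, hw, hnadj⟩ := hcv; exact hnadj (hall w hw))
  obtain ⟨xh, hxh⟩ := hne h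
  obtain ⟨xi, hxi⟩ := hne i
  obtain ⟨xj, hxj⟩ := hne j
  obtain ⟨z, hz⟩ := hne k
  have memP : ∀ {a : Fin r} {w : V}, w ∈ C a → w ∈ P := by
    intro a w hw; rw [hP]; exact Set.mem_iUnion.2 ⟨a, hw⟩
  have hjh : j ≠ h := fun e => hvh xh hxh (hvj xh (e ▸ hxh))
  have hji : j ≠ i := fun e => hui xi hxi (huj xi (e ▸ hxi))
  have hkh : k ≠ h := fun e => huk xh (e ▸ hxh) (huh xh hxh)
  have hki : k ≠ i := fun e => hvk xi (e ▸ hxi) (hvi xi hxi)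
  have hkj : k ≠ j := fun e => huk xj (e ▸ hxj) (huj xj hxj)
  have hne' : ∀ {a b : Fin r} {w1 w2 : V}, a ≠ b → w1 ∈ C a → w2 ∈ C b → w1 ≠ w2 :=
    fun hab h1 h2 => (hdisj _ _ hab).ne_of_mem h1 h2
  have hPN : ∀ {w x : V}, w ∈ P → x ∈ Pᶜ → w ≠ x := fun hw hx e => hx (e ▸ hw)
  have hnadjPP : ∀ {a b : Fin r} {w1 w2 : V}, a ≠ b → w1 ∈ C a → w2 ∈ C b →
      ¬(G ⊔ F).Adj w1 w2 := by
    intro a b w1 w2 hab h1 h2 hadj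
    rcases hadj with hg | hf
    · exact hsep a b hab w1 h1 w2 h2 hg
    · exact (hF _ _ hf).1 (memP h1)
  have hnadjNP : ∀ {x : V} {a : Fin r} {w : V}, x ∈ Pᶜ → w ∈ C a → ¬G.Adj x w →
      ¬(G ⊔ F).Adj x w := by
    intro x a w hx hw hg hadj
    rcases hadj with hg' | hf
    · exact hg hg'
    · exact (hF _ _ hf).2 (memP hw)
  have huv : u ≠ v := fun e => hvh xh hxh (e ▸ huh xh hxh)
  by_cases hfuv : F.Adj u v
  · -- P4 : xh - u - v - xi, isolated z
    refine hfree ⟨z, xh, u, v, xi,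
      ⟨Or.inl (huh xh hxh).symm, Or.inr hfuv, Or.inl (hvi xi hxi),
        fun hadj => hnadjNP hv.1 hxh (hvh xh hxh) hadj.symm,
        hnadjPP hhi hxh hxi, hnadjNP hu.1 hxi (hui xi hxi),
        hPN (memP hxh) hv.1, hne' hhi hxh hxi, (hPN (memP hxi) hu.1).symm⟩,
      hnadjPP hkh hz hxh,
      fun hadj => hnadjNP hu.1 hz (huk z hz) hadj.symm,
      fun hadj => hnadjNP hv.1 hz (hvk z hz) hadj.symm,
      hnadjPP hki hz hxi,
      hne' hkh hz hxh, hPN (memP hz) hu.1, hPN (memP hz) hv.1, hne' hki hz hxi⟩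
  · -- P4 : xh - u - xj - v, isolated z
    refine hfree ⟨z, xh, u, xj, v,
      ⟨Or.inl (huh xh hxh).symm, Or.inl (huj xj hxj), Or.inl (hvj xj hxj).symm,
        hnadjPP hjh.symm hxh hxj,
        fun hadj => hnadjNP hv.1 hxh (hvh xh hxh) hadj.symm,
        fun hadj => (by rcases hadj with hg | hf
                        · exact hind u hu.1 v hv.1 hg
                        · exact hfuv hf),
        hne' hjh.symm hxh hxj, hPN (memP hxh) hv.1, huv⟩,
      hnadjPP hkh hz hxh,
      fun hadj => hnadjNP hu.1 hz (huk z hz) hadj.symm,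
      hnadjPP hkj hz hxj,
      fun hadj => hnadjNP hv.1 hz (hvk z hz) hadj.symm,
      hne' hkh hz hxh, hPN (memP hz) hu.1, hne' hkj hz hxj, hPN (memP hz) hv.1⟩
end

section
/- Let d ≥ 1 and let G be a connected graph with vertex set partitioned into P and an independent set N such that every vertex of N has a neighbour in P. Then G has a red-blue d-colouring in which all vertices of P are blue if and only if G has a red-blue d-colouring in which exactly one vertex (which lies in N) is red and all other vertices are blue. -/
open SimpleGraph

/-! The only red vertex `v` of the colouring `fun u => decide (u = v)` sees all its neighbours
as blue, while every blue vertex has at most the one red neighbour `v`. The red vertex of a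
colouring with `P` blue lies in the independent set `N`, so its neighbours are blue as well;
hence its degree is at most `d`, and recolouring everything else blue keeps a `d`-colouring. -/

namespace IsRBColouring

variable {V : Type*} {G : SimpleGraph V} {d : ℕ}

theorem ncard_neighborSet_le {c : V → Bool} (hc : IsRBColouring G d c) {v : V}
    (hv : ∀ u, G.Adj v u → c u ≠ c v) : (G.neighborSet v).ncard ≤ d := by
  have hset : {u | G.Adj v u ∧ c u ≠ c v} = G.neighborSet v := by
    ext u
    exact ⟨And.left, fun h => ⟨h, hv u h⟩⟩
  exact hset ▸ hc.2.2 v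

theorem single_red [DecidableEq V] (hd : 1 ≤ d) {u v : V} (huv : u ≠ v)
    (hdeg : (G.neighborSet v).ncard ≤ d) :
    IsRBColouring G d (fun w => decide (w = v)) := by
  refine ⟨⟨v, by simp⟩, ⟨u, by simpa using huv⟩, fun w => ?_⟩
  by_cases hw : w = v
  · subst hw
    have hset : {x | G.Adj w x ∧ decide (x = w) ≠ decide (w = w)} = G.neighborSet w := by
      ext x
      simpa using fun h : G.Adj w x => (G.ne_of_adj h).symm
    exact hset ▸ hdeg
  · calc {x | G.Adj w x ∧ decide (x = v) ≠ decide (w = v)}.ncard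
        ≤ ({v} : Set V).ncard :=
          Set.ncard_le_ncard (fun x hx => by simpa [hw] using hx.2) (Set.finite_singleton v)
      _ ≤ d := by simpa using hd

end IsRBColouring

theorem stmt19_general {V : Type*} (G : SimpleGraph V) (d : ℕ) (hd : 1 ≤ d)
    (P N : Set V) (hPN : P = Nᶜ)
    (hind : ∀ u ∈ N, ∀ v ∈ N, ¬G.Adj u v)
    (hdom : ∀ v ∈ N, ∃ u ∈ P, G.Adj v u) :
    (∃ c : V → Bool, IsRBColouring G d c ∧ ∀ v ∈ P, c v = false) ↔
      (∃ c : V → Bool, IsRBColouring G d c ∧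
        ∃ v ∈ N, c v = true ∧ ∀ u : V, u ≠ v → c u = false) := by
  classical
  subst hPN
  constructor
  · rintro ⟨c, hc, hPblue⟩
    obtain ⟨v, hv⟩ := hc.1
    have hvN : v ∈ N := by_contra fun h => by simp [hPblue v h] at hv
    have hdeg : (G.neighborSet v).ncard ≤ d :=
      hc.ncard_neighborSet_le fun u hadj => by
        rw [hv, hPblue u (hind v hvN u · hadj)]
        decide
    obtain ⟨u, hu, -⟩ := hdom v hvN
    refine ⟨_, IsRBColouring.single_red hd (u := u) (by rintro rfl; exact hu hvN) hdeg,
      v, hvN, by simp, fun w hw => by simpa using hw⟩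
  · rintro ⟨c, hc, v, hvN, -, hblue⟩
    exact ⟨c, hc, fun u hu => hblue u (by rintro rfl; exact hu hvN)⟩

theorem stmt19 {V : Type*} [Fintype V] (G : SimpleGraph V) (d : ℕ) (hd : 1 ≤ d)
    (hG : G.Connected) (P N : Set V) (hPN : P = Nᶜ)
    (hind : ∀ u ∈ N, ∀ v ∈ N, ¬G.Adj u v)
    (hdom : ∀ v ∈ N, ∃ u ∈ P, G.Adj v u) :
    (∃ c : V → Bool, IsRBColouring G d c ∧ ∀ v ∈ P, c v = false) ↔
      (∃ c : V → Bool, IsRBColouring G d c ∧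
        ∃ v ∈ N, c v = true ∧ ∀ u : V, u ≠ v → c u = false) :=
  stmt19_general G d hd P N hPN hind hdom
end
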